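/- arXiv:1911.01388 — 4 statements merged into one kernel-verified Lean document; each statement's English description precedes it below -/
import Mathlib

section
/- Let δ : T(V) → T(V) be an R-linear derivation with δ(ι(v)) ∈ L(V) for every v ∈ V and δ ∘ δ = 0 (so δ(L(V)) ⊆ L(V)). Let K be an associative R-algebra equipped with an R-linear derivation d : K → K satisfying d ∘ d = 0, and let φ : L(V) → K be an R-linear map satisfying φ([x,y]) = φ(x)*φ(y) − φ(y)*φ(x) for all x, y ∈ L(V) and φ(δ(x)) = d(φ(x)) for all x ∈ L(V). Then there exists a unique R-algebra homomorphism Φ : T(V) → K such that Φ(x) = φ(x) for all x ∈ L(V) and Φ ∘ δ = d ∘ Φ. (Ungraded core of part (2) of the paper's Theorem: (T(V), δ) is the universal enveloping algebra of the differential Lie algebra (L(V), δ).) -/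
attribute [local instance 100] LieRing.ofAssociativeRing

/-- The smallest Lie subalgebra of the tensor algebra `T(V)` (with the commutator bracket
`[x,y] = x*y - y*x`) containing the image of the canonical inclusion `ι : V → T(V)`. -/
noncomputable def freeLieInTensorAlgebra (R V : Type*) [CommRing R] [AddCommGroup V]
    [Module R V] : LieSubalgebra R (TensorAlgebra R V) :=
  LieSubalgebra.lieSpan R (TensorAlgebra R V) (Set.range (TensorAlgebra.ι R (M := V)))

/-- Let `δ : T(V) → T(V)` be an `R`-linear derivation with `δ(ι(v)) ∈ L(V)`
for all `v ∈ V` and `δ ∘ δ = 0` (so `δ(L(V)) ⊆ L(V)`).  Let `K` be an associative `R`-algebra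
with an `R`-linear derivation `d` satisfying `d ∘ d = 0`, and let `φ : L(V) → K` be an
`R`-linear map with `φ([x,y]) = φ(x)φ(y) - φ(y)φ(x)` and `φ(δ(x)) = d(φ(x))` for `x ∈ L(V)`.
Then there is a unique `R`-algebra homomorphism `Φ : T(V) → K` with `Φ = φ` on `L(V)` and
`Φ ∘ δ = d ∘ Φ`. -/
theorem stmt2 {R V K : Type*} [CommRing R] [AddCommGroup V] [Module R V]
    [Ring K] [Algebra R K]
    (δ : TensorAlgebra R V →ₗ[R] TensorAlgebra R V)
    (hder : ∀ x y : TensorAlgebra R V, δ (x * y) = δ x * y + x * δ y)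
    (hδι : ∀ v : V, δ (TensorAlgebra.ι R v) ∈ freeLieInTensorAlgebra R V)
    (hδδ : ∀ x, δ (δ x) = 0)
    (hpres : ∀ x ∈ freeLieInTensorAlgebra R V, δ x ∈ freeLieInTensorAlgebra R V)
    (d : K →ₗ[R] K)
    (hd : ∀ x y : K, d (x * y) = d x * y + x * d y)
    (hdd : ∀ x, d (d x) = 0)
    (φ : freeLieInTensorAlgebra R V →ₗ[R] K)
    (hφbrak : ∀ x y : freeLieInTensorAlgebra R V, φ ⁅x, y⁆ = φ x * φ y - φ y * φ x)
    (hφδ : ∀ x : freeLieInTensorAlgebra R V,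
      φ ⟨δ (x : TensorAlgebra R V), hpres _ x.2⟩ = d (φ x)) :
    ∃! Φ : TensorAlgebra R V →ₐ[R] K,
      (∀ x : freeLieInTensorAlgebra R V, Φ (x : TensorAlgebra R V) = φ x) ∧
      (∀ y : TensorAlgebra R V, Φ (δ y) = d (Φ y)) := by
  classical
  have hmem : ∀ v : V, TensorAlgebra.ι R v ∈ freeLieInTensorAlgebra R V :=
    fun v => LieSubalgebra.subset_lieSpan ⟨v, rfl⟩
  let f : V →ₗ[R] K :=
    φ.comp ((TensorAlgebra.ι R).codRestrict
      ((freeLieInTensorAlgebra R V) : Submodule R (TensorAlgebra R V)) hmem)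
  let Φ : TensorAlgebra R V →ₐ[R] K := TensorAlgebra.lift R f
  have hΦι : ∀ v : V, Φ (TensorAlgebra.ι R v) = φ ⟨TensorAlgebra.ι R v, hmem v⟩ := by
    intro v
    show TensorAlgebra.lift R f (TensorAlgebra.ι R v) = _
    rw [TensorAlgebra.lift_ι_apply]
    rfl
  have key : ∀ x : TensorAlgebra R V, x ∈ freeLieInTensorAlgebra R V →
      ∃ hx : x ∈ freeLieInTensorAlgebra R V, Φ x = φ ⟨x, hx⟩ := by
    intro x hx
    refine LieSubalgebra.lieSpan_induction R (p := fun x _ =>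
      ∃ hx : x ∈ freeLieInTensorAlgebra R V, Φ x = φ ⟨x, hx⟩) ?_ ?_ ?_ ?_ ?_ hx
    · rintro _ ⟨v, rfl⟩
      exact ⟨hmem v, hΦι v⟩
    · refine ⟨(freeLieInTensorAlgebra R V).zero_mem, ?_⟩
      have : (⟨0, (freeLieInTensorAlgebra R V).zero_mem⟩ :
          freeLieInTensorAlgebra R V) = 0 := rfl
      rw [this, map_zero, map_zero]
    swap
    · rintro r x - ⟨hx, hx'⟩
      refine ⟨(freeLieInTensorAlgebra R V).smul_mem r hx, ?_⟩
      have : (⟨r • x, (freeLieInTensorAlgebra R V).smul_mem r hx⟩ :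
          freeLieInTensorAlgebra R V) = r • ⟨x, hx⟩ := rfl
      rw [this, map_smul, map_smul, hx']
    · rintro x y - - ⟨hx, hx'⟩ ⟨hy, hy'⟩
      refine ⟨(freeLieInTensorAlgebra R V).add_mem hx hy, ?_⟩
      have : (⟨x + y, (freeLieInTensorAlgebra R V).add_mem hx hy⟩ :
          freeLieInTensorAlgebra R V) = ⟨x, hx⟩ + ⟨y, hy⟩ := rfl
      rw [this, map_add, map_add, hx', hy']
    · rintro x y - - ⟨hx, hx'⟩ ⟨hy, hy'⟩
      refine ⟨(freeLieInTensorAlgebra R V).lie_mem hx hy, ?_⟩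
      have : (⟨⁅x, y⁆, (freeLieInTensorAlgebra R V).lie_mem hx hy⟩ :
          freeLieInTensorAlgebra R V) = ⁅(⟨x, hx⟩ : freeLieInTensorAlgebra R V), ⟨y, hy⟩⁆ := rfl
      rw [this, hφbrak, ← hx', ← hy']
      show Φ (x * y - y * x) = _
      rw [map_sub, map_mul, map_mul]
  have hon : ∀ x : freeLieInTensorAlgebra R V, Φ (x : TensorAlgebra R V) = φ x := by
    rintro ⟨x, hx⟩
    obtain ⟨hx', h⟩ := key x hx
    exact h
  have hcomm : ∀ y : TensorAlgebra R V, Φ (δ y) = d (Φ y) := by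
    intro y
    induction y using TensorAlgebra.induction with
    | algebraMap r =>
        have h1 : δ (algebraMap R (TensorAlgebra R V) r) = 0 := by
          have := hder 1 1
          simp at this
          rw [Algebra.algebraMap_eq_smul_one, map_smul, this, smul_zero]
        have h2 : d (algebraMap R K r) = 0 := by
          have := hd 1 1
          simp at this
          rw [Algebra.algebraMap_eq_smul_one, map_smul, this, smul_zero]
        simp [h1, h2]
    | ι v =>
        obtain ⟨hm', h⟩ := key _ (hδι v)
        rw [h, hΦι v, ← hφδ ⟨TensorAlgebra.ι R v, hmem v⟩]
    | mul x y hx hy =>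
        rw [hder, map_add, map_mul, map_mul, map_mul, hd, hx, hy]
    | add x y hx hy =>
        rw [map_add, map_add, map_add, map_add, hx, hy]
  refine ⟨Φ, ⟨hon, hcomm⟩, ?_⟩
  rintro Ψ ⟨hΨ, -⟩
  apply TensorAlgebra.hom_ext
  ext v
  simp only [LinearMap.coe_comp, Function.comp_apply, AlgHom.toLinearMap_apply]
  rw [hΨ ⟨TensorAlgebra.ι R v, hmem v⟩, hΦι v]
end

section
/- Let δ : T(V) → T(V) be an R-linear derivation such that δ(ι(v)) ∈ L(V) for every v ∈ V. Then δ is a coderivation with respect to Δ: Δ ∘ δ = (δ ⊗ id_{T(V)} + id_{T(V)} ⊗ δ) ∘ Δ. (This underlies the paper's claim that the polydifferential operators with the Hochschild differential form a Hopf algebra object in the category of dg complexes.) -/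
open scoped TensorProduct

attribute [local instance 100] LieRing.ofAssociativeRing

/-- Let `Δ : T(V) → T(V) ⊗ T(V)` be the (unique) `R`-algebra homomorphism
with `Δ(ι(v)) = ι(v) ⊗ 1 + 1 ⊗ ι(v)`, and let `δ : T(V) → T(V)` be an `R`-linear derivation
such that `δ(ι(v)) ∈ L(V)` for every `v ∈ V`.  Then `δ` is a coderivation for `Δ`:
`Δ ∘ δ = (δ ⊗ id + id ⊗ δ) ∘ Δ`. -/
theorem stmt4 {R V : Type*} [CommRing R] [AddCommGroup V] [Module R V]
    (Δ : TensorAlgebra R V →ₐ[R] TensorAlgebra R V ⊗[R] TensorAlgebra R V)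
    (hΔ : ∀ v : V, Δ (TensorAlgebra.ι R v) =
      TensorAlgebra.ι R v ⊗ₜ[R] 1 + 1 ⊗ₜ[R] TensorAlgebra.ι R v)
    (δ : TensorAlgebra R V →ₗ[R] TensorAlgebra R V)
    (hder : ∀ x y : TensorAlgebra R V, δ (x * y) = δ x * y + x * δ y)
    (hι : ∀ v : V, δ (TensorAlgebra.ι R v) ∈ freeLieInTensorAlgebra R V) :
    ∀ x : TensorAlgebra R V,
      Δ (δ x) = TensorProduct.map δ LinearMap.id (Δ x) + TensorProduct.map LinearMap.id δ (Δ x) := by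
  have hδ1 : δ 1 = 0 := by
    have h := hder 1 1
    simp only [one_mul, mul_one] at h
    exact (left_eq_add.mp h)
  -- primitives: every element of the free Lie algebra is primitive
  have hprim : ∀ w ∈ freeLieInTensorAlgebra R V, Δ w = w ⊗ₜ[R] 1 + 1 ⊗ₜ[R] w := by
    intro w hw
    refine LieSubalgebra.lieSpan_induction R (p := fun w _ => Δ w = w ⊗ₜ[R] 1 + 1 ⊗ₜ[R] w)
      ?_ ?_ ?_ ?_ ?_ hw
    · rintro x ⟨v, rfl⟩; exact hΔ v
    · simp
    · intro x y _ _ hx hy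
      simp only [map_add, hx, hy, TensorProduct.add_tmul, TensorProduct.tmul_add]
      abel
    · intro r x _ hx
      simp [map_smul, hx, TensorProduct.smul_tmul', TensorProduct.tmul_smul, smul_add]
    · intro x y _ _ hx hy
      simp only [Ring.lie_def, map_sub, map_mul, hx, hy, add_mul, mul_add,
        Algebra.TensorProduct.tmul_mul_tmul, one_mul, mul_one,
        TensorProduct.sub_tmul, TensorProduct.tmul_sub]
      abel
  -- derivation property of map δ id + map id δ on T ⊗ T
  set D : TensorAlgebra R V ⊗[R] TensorAlgebra R V →ₗ[R]
      TensorAlgebra R V ⊗[R] TensorAlgebra R V :=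
    TensorProduct.map δ LinearMap.id + TensorProduct.map LinearMap.id δ with hD
  have hDder : ∀ a b : TensorAlgebra R V ⊗[R] TensorAlgebra R V,
      D (a * b) = D a * b + a * D b := by
    intro a b
    induction a using TensorProduct.induction_on with
    | zero => simp
    | add x y hx hy => simp only [add_mul, map_add, hx, hy]; abel
    | tmul x₁ x₂ =>
      induction b using TensorProduct.induction_on with
      | zero => simp
      | add u v hu hv => simp only [mul_add, map_add, hu, hv]; abel
      | tmul y₁ y₂ =>
        simp only [hD, Algebra.TensorProduct.tmul_mul_tmul, LinearMap.add_apply,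
          TensorProduct.map_tmul, LinearMap.id_coe, id_eq, hder]
        simp only [TensorProduct.add_tmul, TensorProduct.tmul_add, add_mul, mul_add,
          Algebra.TensorProduct.tmul_mul_tmul]
        abel
  intro x
  induction x using TensorAlgebra.induction with
  | algebraMap r =>
    have : δ (algebraMap R (TensorAlgebra R V) r) = 0 := by
      rw [Algebra.algebraMap_eq_smul_one, map_smul, hδ1, smul_zero]
    rw [this, map_zero, AlgHom.commutes]
    simp [Algebra.TensorProduct.algebraMap_apply, this, hδ1]
  | ι v =>
    have h1 : D (Δ (TensorAlgebra.ι R v)) =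
        δ (TensorAlgebra.ι R v) ⊗ₜ[R] 1 + 1 ⊗ₜ[R] δ (TensorAlgebra.ι R v) := by
      simp [hD, hΔ v, hδ1]
    have := hprim _ (hι v)
    calc Δ (δ (TensorAlgebra.ι R v)) = D (Δ (TensorAlgebra.ι R v)) := by
          rw [h1, this]
      _ = _ := by simp [hD]
  | mul a b ha hb =>
    have h := hDder (Δ a) (Δ b)
    calc Δ (δ (a * b)) = Δ (δ a) * Δ b + Δ a * Δ (δ b) := by
          rw [hder]; simp [map_mul]
      _ = D (Δ a) * Δ b + Δ a * D (Δ b) := by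
          rw [ha, hb]; simp [hD]
      _ = D (Δ a * Δ b) := h.symm
      _ = D (Δ (a * b)) := by rw [map_mul Δ a b]
      _ = _ := by simp [hD]
  | add a b ha hb =>
    simp only [map_add, ha, hb]; abel
end

section
/- For cochains F, G, H on an associative R-algebra A of arities p, q, r ≥ 1 respectively, the Gerstenhaber bracket satisfies graded antisymmetry [F,G] = −(−1)^{(p−1)(q−1)} [G,F] and the graded Jacobi identity [F,[G,H]] = [[F,G],H] + (−1)^{(p−1)(q−1)} [G,[F,H]]. -/
/-- The Gerstenhaber product of a `(p+1)`-cochain `F` and a `(q+1)`-cochain `G`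
(written with `0`-based indexing). -/
def gprod {A : Type*} [Ring A] {p q : ℕ}
    (F : (Fin (p + 1) → A) → A) (G : (Fin (q + 1) → A) → A) :
    (Fin (p + q + 1) → A) → A := fun a =>
  ∑ j : Fin (p + 1), (-1 : A) ^ (q * (j : ℕ)) *
    F (fun i =>
      if (i : ℕ) < (j : ℕ) then a ⟨i, by have := i.isLt; omega⟩
      else if (i : ℕ) = (j : ℕ) then
        G (fun l => a ⟨(j : ℕ) + (l : ℕ), by have := j.isLt; have := l.isLt; omega⟩)
      else a ⟨(i : ℕ) + q, by have := i.isLt; omega⟩)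

/-- The Gerstenhaber bracket of a `(p+1)`-cochain and a `(q+1)`-cochain:
`[F,G] = F ∘ G − (−1)^{pq} G ∘ F`. -/
def gbrak {A : Type*} [Ring A] {p q : ℕ}
    (F : (Fin (p + 1) → A) → A) (G : (Fin (q + 1) → A) → A) :
    (Fin (p + q + 1) → A) → A := fun a =>
  gprod F G a - (-1 : A) ^ (p * q) * gprod G F (fun i => a (Fin.cast (by omega) i))

namespace Gerst
variable {A : Type*} [Ring A]

def insV {n q : ℕ} (j : ℕ) (v : A) (a : Fin (n + q + 1) → A) : Fin (n + 1) → A :=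
  fun i => if (i : ℕ) < j then a ⟨i, by have := i.isLt; omega⟩
    else if (i : ℕ) = j then v
    else a ⟨(i : ℕ) + q, by have := i.isLt; omega⟩

def sub {n : ℕ} (q : ℕ) (j : ℕ) (a : Fin (n + q + 1) → A) : Fin (q + 1) → A :=
  fun l => a ⟨min j n + l, by have := l.isLt; omega⟩

def dins {p q r : ℕ} (u v : ℕ) (G : (Fin (q + 1) → A) → A) (H : (Fin (r + 1) → A) → A)
    (a : Fin (p + q + r + 1) → A) : Fin (p + 1) → A :=
  fun i => if (i : ℕ) < u then a ⟨i, by have := i.isLt; omega⟩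
    else if (i : ℕ) = u then G (fun l => a ⟨min u p + l, by have := l.isLt; omega⟩)
    else if (i : ℕ) < v then a ⟨(i : ℕ) + q, by have := i.isLt; omega⟩
    else if (i : ℕ) = v then H (fun t => a ⟨min v p + q + t, by have := t.isLt; omega⟩)
    else a ⟨(i : ℕ) + q + r, by have := i.isLt; omega⟩

lemma gprod_eq {p q : ℕ} (F : (Fin (p + 1) → A) → A) (G : (Fin (q + 1) → A) → A)
    (a : Fin (p + q + 1) → A) :
    gprod F G a = ∑ j : Fin (p + 1), (-1 : A) ^ (q * (j : ℕ)) *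
      F (insV (j : ℕ) (G (sub q (j : ℕ) a)) a) := by
  refine Finset.sum_congr rfl fun j _ => ?_
  refine congrArg _ (congrArg F (funext fun i => ?_))
  simp only [insV, sub]
  split_ifs with h1 h2 <;> try rfl
  refine congrArg G (funext fun l => ?_)
  exact congrArg a (Fin.ext (by simp; omega))

lemma nest {p q r : ℕ} (j m : ℕ) (hj : j ≤ p) (hm : m ≤ q)
    (G : (Fin (q + 1) → A) → A) (H : (Fin (r + 1) → A) → A)
    (a : Fin (p + q + r + 1) → A) :
    insV (q := q) j (G (sub q j (insV (q := r) (j + m) (H (sub r (j + m) a)) a)))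
        (insV (q := r) (j + m) (H (sub r (j + m) a)) a)
      = insV (q := q + r) j
          (G (insV (q := r) m
            (H (sub r m (sub (q + r) j (fun i : Fin (p + (q + r) + 1) => a (Fin.cast (by simp only [Nat.add_assoc]) i)))))
            (sub (q + r) j (fun i : Fin (p + (q + r) + 1) => a (Fin.cast (by simp only [Nat.add_assoc]) i)))))
          (fun i : Fin (p + (q + r) + 1) => a (Fin.cast (by simp only [Nat.add_assoc]) i)) := by
  funext i
  rcases i with ⟨i, hi⟩
  simp only [insV, sub]
  split_ifs <;>
    first
      | rfl
      | omega
      | (exact congrArg a (by apply Fin.ext; simp only [Fin.coe_cast]; omega))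
      | (refine congrArg G (funext fun l => ?_) ; have hl := l.isLt
         simp only [insV, sub]; split_ifs <;>
          first
            | rfl
            | omega
            | (exact congrArg a (by apply Fin.ext; simp only [Fin.coe_cast]; omega))
            | (refine congrArg H (funext fun t => ?_) ; have ht := t.isLt
               simp only [insV, sub]
               exact congrArg a (by apply Fin.ext; simp only [Fin.coe_cast]; omega)))

lemma dlem {p q r : ℕ} (j k : ℕ) (hj : j ≤ p) (hk1 : j + q < k) (hk2 : k ≤ p + q)
    (G : (Fin (q + 1) → A) → A) (H : (Fin (r + 1) → A) → A)
    (a : Fin (p + q + r + 1) → A) :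
    insV (q := q) j (G (sub q j (insV (q := r) k (H (sub r k a)) a)))
        (insV (q := r) k (H (sub r k a)) a)
      = dins j (k - q) G H a := by
  funext i
  rcases i with ⟨i, hi⟩
  simp only [insV, sub, dins]
  split_ifs <;>
    first
      | rfl
      | omega
      | (exact congrArg a (by apply Fin.ext; simp only [Fin.coe_cast]; omega))
      | (exact congrArg H (funext fun t => by
          have ht := t.isLt
          exact congrArg a (by apply Fin.ext; simp only [Fin.coe_cast]; omega)))
      | (refine congrArg G (funext fun l => ?_) ; have hl := l.isLt
         simp only [insV, sub]; split_ifs <;>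
          first
            | rfl
            | omega
            | (exact congrArg a (by apply Fin.ext; simp only [Fin.coe_cast]; omega)))

lemma elem {p q r : ℕ} (j k : ℕ) (hj : j ≤ p) (hk : k < j)
    (G : (Fin (q + 1) → A) → A) (H : (Fin (r + 1) → A) → A)
    (a : Fin (p + q + r + 1) → A) :
    insV (q := q) j (G (sub q j (insV (q := r) k (H (sub r k a)) a)))
        (insV (q := r) k (H (sub r k a)) a)
      = dins (p := p) (q := r) (r := q) k j H G
          (fun i : Fin (p + r + q + 1) => a (Fin.cast (by omega) i)) := by
  funext i
  rcases i with ⟨i, hi⟩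
  simp only [insV, sub, dins]
  split_ifs <;>
    first
      | rfl
      | omega
      | (exact congrArg a (by apply Fin.ext; simp only [Fin.coe_cast]; omega))
      | (exact congrArg H (funext fun t => by
          have ht := t.isLt
          exact congrArg a (by apply Fin.ext; simp only [Fin.coe_cast]; omega)))
      | (refine congrArg G (funext fun l => ?_) ; have hl := l.isLt
         simp only [insV, sub]; split_ifs <;>
          first
            | rfl
            | omega
            | (exact congrArg a (by apply Fin.ext; simp only [Fin.coe_cast]; omega)))

lemma insV_update {n q : ℕ} (j : ℕ) (hj : j ≤ n) (v : A) (a : Fin (n + q + 1) → A) :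
    insV j v a = Function.update (insV j 0 a) ⟨j, by omega⟩ v := by
  funext i
  rcases i with ⟨i, hi⟩
  simp only [insV, Function.update, Fin.mk.injEq]
  split_ifs <;> first | rfl | omega | simp_all

lemma sum_range_ite_lt (N v : ℕ) (g : ℕ → A) :
    (∑ u ∈ Finset.range N, if u < v then g u else 0) = ∑ u ∈ Finset.range (min v N), g u := by
  rw [← Finset.sum_filter]
  congr 1
  ext x
  simp only [Finset.mem_filter, Finset.mem_range]
  omega

lemma sum_range_ite_gt (N c : ℕ) (g : ℕ → A) :
    (∑ v ∈ Finset.range N, if c < v then g v else 0)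
      = ∑ m ∈ Finset.range (N - (c + 1)), g (c + 1 + m) := by
  rw [← Finset.sum_filter]
  have h : (Finset.range N).filter (fun v => c < v) = Finset.Ico (c + 1) N := by
    ext x
    simp only [Finset.mem_filter, Finset.mem_range, Finset.mem_Ico]
    omega
  rw [h, Finset.sum_Ico_eq_sum_range]

variable {R : Type*} [CommRing R] [Algebra R A]

lemma map_insV_add {n q : ℕ} (F : MultilinearMap R (fun _ : Fin (n + 1) => A) A)
    (j : ℕ) (hj : j ≤ n) (x y : A) (a : Fin (n + q + 1) → A) :
    F (insV j (x + y) a) = F (insV j x a) + F (insV j y a) := by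
  rw [insV_update j hj (x + y), insV_update j hj x, insV_update j hj y]
  exact F.map_update_add _ _ _ _

lemma map_insV_zero {n q : ℕ} (F : MultilinearMap R (fun _ : Fin (n + 1) => A) A)
    (j : ℕ) (hj : j ≤ n) (a : Fin (n + q + 1) → A) :
    F (insV j (0 : A) a) = 0 := by
  refine F.map_coord_zero (m := insV j 0 a) ⟨j, by omega⟩ ?_
  simp [insV]

lemma map_insV_neg {n q : ℕ} (F : MultilinearMap R (fun _ : Fin (n + 1) => A) A)
    (j : ℕ) (hj : j ≤ n) (x : A) (a : Fin (n + q + 1) → A) :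
    F (insV j (-x) a) = - F (insV j x a) := by
  have h := map_insV_add F j hj x (-x) a
  rw [add_neg_cancel, map_insV_zero F j hj] at h
  exact eq_neg_of_add_eq_zero_right h.symm

lemma map_insV_sub {n q : ℕ} (F : MultilinearMap R (fun _ : Fin (n + 1) => A) A)
    (j : ℕ) (hj : j ≤ n) (x y : A) (a : Fin (n + q + 1) → A) :
    F (insV j (x - y) a) = F (insV j x a) - F (insV j y a) := by
  rw [sub_eq_add_neg, map_insV_add F j hj, map_insV_neg F j hj, sub_eq_add_neg]

lemma map_insV_sign {n q : ℕ} (F : MultilinearMap R (fun _ : Fin (n + 1) => A) A)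
    (j : ℕ) (hj : j ≤ n) (e : ℕ) (x : A) (a : Fin (n + q + 1) → A) :
    F (insV j ((-1 : A) ^ e * x) a) = (-1 : A) ^ e * F (insV j x a) := by
  rcases Nat.even_or_odd e with he | he
  · rw [he.neg_one_pow, one_mul, one_mul]
  · rw [he.neg_one_pow, neg_one_mul, neg_one_mul, map_insV_neg F j hj]

lemma map_insV_sum {n q : ℕ} (F : MultilinearMap R (fun _ : Fin (n + 1) => A) A)
    (j : ℕ) (hj : j ≤ n) {ι : Type*} (s : Finset ι) (y : ι → A)
    (a : Fin (n + q + 1) → A) :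
    F (insV j (∑ m ∈ s, y m) a) = ∑ m ∈ s, F (insV j (y m) a) := by
  classical
  induction s using Finset.induction with
  | empty => simpa using map_insV_zero F j hj a
  | insert _ _ hx ih =>
      rw [Finset.sum_insert hx, Finset.sum_insert hx, map_insV_add F j hj, ih]




def dd {p q r : ℕ} (F : (Fin (p + 1) → A) → A) (G : (Fin (q + 1) → A) → A)
    (H : (Fin (r + 1) → A) → A) (a : Fin (p + q + r + 1) → A) : A :=
  ∑ u : Fin (p + 1), ∑ v : Fin (p + 1),
    if (u : ℕ) < (v : ℕ) then
      (-1 : A) ^ (q * (u : ℕ) + r * (v : ℕ)) * F (dins (u : ℕ) (v : ℕ) G H a)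
    else 0

def TT {p q r : ℕ} (F : (Fin (p + 1) → A) → A) (G : (Fin (q + 1) → A) → A)
    (H : (Fin (r + 1) → A) → A) (a : Fin (p + q + r + 1) → A) (j k : ℕ) : A :=
  (-1 : A) ^ (r * k + q * j) *
    F (insV (q := q) j (G (sub q j (insV (q := r) k (H (sub r k a)) a)))
        (insV (q := r) k (H (sub r k a)) a))


lemma expand {p q r : ℕ} (F : MultilinearMap R (fun _ : Fin (p + 1) => A) A)
    (G : (Fin (q + 1) → A) → A) (H : (Fin (r + 1) → A) → A)
    (a : Fin (p + q + r + 1) → A) :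
    gprod (gprod ⇑F G) H a
      = gprod ⇑F (gprod G H) (fun i : Fin (p + (q + r) + 1) => a (Fin.cast (by simp only [Nat.add_assoc]) i))
        + (-1 : A) ^ (q * r) * dd ⇑F G H a
        + dd (p := p) (q := r) (r := q) ⇑F H G
            (fun i : Fin (p + r + q + 1) => a (Fin.cast (by omega) i)) := by
  have hA : gprod (gprod ⇑F G) H a
      = ∑ j : Fin (p + 1), ∑ k ∈ Finset.range (p + q + 1), TT ⇑F G H a (j : ℕ) k := by
    rw [gprod_eq (gprod ⇑F G) H a]
    have h1 : ∀ k : Fin (p + q + 1),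
        (-1 : A) ^ (r * (k : ℕ)) *
          gprod ⇑F G (insV (q := r) (k : ℕ) (H (sub r (k : ℕ) a)) a)
        = ∑ j : Fin (p + 1), TT ⇑F G H a (j : ℕ) (k : ℕ) := by
      intro k
      rw [gprod_eq, Finset.mul_sum]
      refine Finset.sum_congr rfl fun j _ => ?_
      rw [TT, ← mul_assoc, ← pow_add]
    calc (∑ k : Fin (p + q + 1), (-1 : A) ^ (r * (k : ℕ)) *
            gprod ⇑F G (insV (q := r) (k : ℕ) (H (sub r (k : ℕ) a)) a))
        = ∑ k : Fin (p + q + 1), ∑ j : Fin (p + 1), TT ⇑F G H a (j : ℕ) (k : ℕ) :=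
          Finset.sum_congr rfl fun k _ => h1 k
      _ = ∑ j : Fin (p + 1), ∑ k : Fin (p + q + 1), TT ⇑F G H a (j : ℕ) (k : ℕ) :=
          Finset.sum_comm
      _ = ∑ j : Fin (p + 1), ∑ k ∈ Finset.range (p + q + 1), TT ⇑F G H a (j : ℕ) k :=
          Finset.sum_congr rfl fun j _ =>
            Fin.sum_univ_eq_sum_range (fun k => TT ⇑F G H a (j : ℕ) k) (p + q + 1)
  have hsplit : ∀ j : Fin (p + 1),
      (∑ k ∈ Finset.range (p + q + 1), TT ⇑F G H a (j : ℕ) k)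
        = (∑ k ∈ Finset.range (j : ℕ), TT ⇑F G H a (j : ℕ) k)
          + ((∑ m ∈ Finset.range (q + 1), TT ⇑F G H a (j : ℕ) ((j : ℕ) + m))
          + (∑ m ∈ Finset.range (p - (j : ℕ)), TT ⇑F G H a (j : ℕ) ((j : ℕ) + q + 1 + m))) := by
    intro j
    have hj : (j : ℕ) ≤ p := j.is_le
    have h1 := Finset.sum_Ico_consecutive (fun k => TT ⇑F G H a (j : ℕ) k)
      (show 0 ≤ (j : ℕ) by omega) (show (j : ℕ) ≤ p + q + 1 by omega)
    have h2 := Finset.sum_Ico_consecutive (fun k => TT ⇑F G H a (j : ℕ) k)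
      (show (j : ℕ) ≤ (j : ℕ) + q + 1 by omega) (show (j : ℕ) + q + 1 ≤ p + q + 1 by omega)
    rw [show Finset.range (p + q + 1) = Finset.Ico 0 (p + q + 1) from Finset.range_eq_Ico _,
      ← h1, ← h2]
    beta_reduce
    have hAA : (∑ i ∈ Finset.Ico 0 (j : ℕ), TT ⇑F G H a (j : ℕ) i)
        = ∑ k ∈ Finset.range (j : ℕ), TT ⇑F G H a (j : ℕ) k := by
      rw [← Finset.range_eq_Ico]
    have hB : (∑ i ∈ Finset.Ico (j : ℕ) ((j : ℕ) + q + 1), TT ⇑F G H a (j : ℕ) i)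
        = ∑ m ∈ Finset.range (q + 1), TT ⇑F G H a (j : ℕ) ((j : ℕ) + m) := by
      rw [Finset.sum_Ico_eq_sum_range]
      have e : (j : ℕ) + q + 1 - (j : ℕ) = q + 1 := by omega
      rw [e]
    have hC : (∑ i ∈ Finset.Ico ((j : ℕ) + q + 1) (p + q + 1), TT ⇑F G H a (j : ℕ) i)
        = ∑ m ∈ Finset.range (p - (j : ℕ)), TT ⇑F G H a (j : ℕ) ((j : ℕ) + q + 1 + m) := by
      rw [Finset.sum_Ico_eq_sum_range]
      have e : p + q + 1 - ((j : ℕ) + q + 1) = p - (j : ℕ) := by omega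
      rw [e]
    rw [hAA, hB, hC]
  have hmid : gprod ⇑F (gprod G H)
        (fun i : Fin (p + (q + r) + 1) => a (Fin.cast (by simp only [Nat.add_assoc]) i))
      = ∑ j : Fin (p + 1), ∑ m ∈ Finset.range (q + 1), TT ⇑F G H a (j : ℕ) ((j : ℕ) + m) := by
    rw [gprod_eq]
    refine Finset.sum_congr rfl fun j _ => ?_
    have hj : (j : ℕ) ≤ p := j.is_le
    rw [gprod_eq G H, map_insV_sum F (j : ℕ) hj, Finset.mul_sum]
    refine Eq.trans ?_ (Fin.sum_univ_eq_sum_range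
      (fun m => TT ⇑F G H a (j : ℕ) ((j : ℕ) + m)) (q + 1))
    refine Finset.sum_congr rfl fun m _ => ?_
    rw [map_insV_sign F (j : ℕ) hj, ← mul_assoc, ← pow_add, TT,
      ← nest (j : ℕ) (m : ℕ) hj m.is_le G H a]
    congr 2
    ring
  have hlow : (∑ j : Fin (p + 1), ∑ k ∈ Finset.range (j : ℕ), TT ⇑F G H a (j : ℕ) k)
      = dd (p := p) (q := r) (r := q) ⇑F H G
          (fun i : Fin (p + r + q + 1) => a (Fin.cast (by omega) i)) := by
    rw [dd, Finset.sum_comm]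
    refine Finset.sum_congr rfl fun v _ => ?_
    have hv : (v : ℕ) ≤ p := v.is_le
    rw [Fin.sum_univ_eq_sum_range (fun u =>
      if u < (v : ℕ) then
        (-1 : A) ^ (r * u + q * (v : ℕ)) * F (dins (p := p) (q := r) (r := q) u (v : ℕ) H G
          (fun i : Fin (p + r + q + 1) => a (Fin.cast (by omega) i)))
      else 0) (p + 1)]
    rw [sum_range_ite_lt]
    have e : min (v : ℕ) (p + 1) = (v : ℕ) := by omega
    rw [e]
    refine Finset.sum_congr rfl fun k hk => ?_
    have hkv : k < (v : ℕ) := Finset.mem_range.mp hk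
    rw [TT, elem (v : ℕ) k hv hkv G H a]
  have hhigh : (∑ j : Fin (p + 1), ∑ m ∈ Finset.range (p - (j : ℕ)),
        TT ⇑F G H a (j : ℕ) ((j : ℕ) + q + 1 + m))
      = (-1 : A) ^ (q * r) * dd ⇑F G H a := by
    rw [dd, Finset.mul_sum]
    refine Finset.sum_congr rfl fun u _ => ?_
    have hu : (u : ℕ) ≤ p := u.is_le
    rw [Finset.mul_sum]
    have h3 : ∀ v : Fin (p + 1),
        (-1 : A) ^ (q * r) * (if (u : ℕ) < (v : ℕ) then
          (-1 : A) ^ (q * (u : ℕ) + r * (v : ℕ)) * F (dins (u : ℕ) (v : ℕ) G H a) else 0)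
        = (if (u : ℕ) < (v : ℕ) then
            (-1 : A) ^ (q * r + (q * (u : ℕ) + r * (v : ℕ))) * F (dins (u : ℕ) (v : ℕ) G H a)
          else 0) := by
      intro v
      split_ifs
      · rw [← mul_assoc, ← pow_add]
      · rw [mul_zero]
    rw [Finset.sum_congr rfl fun v _ => h3 v]
    rw [Fin.sum_univ_eq_sum_range (fun v =>
      if (u : ℕ) < v then
        (-1 : A) ^ (q * r + (q * (u : ℕ) + r * v)) * F (dins (u : ℕ) v G H a)
      else 0) (p + 1)]
    rw [sum_range_ite_gt]
    have e : p + 1 - ((u : ℕ) + 1) = p - (u : ℕ) := by omega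
    rw [e]
    refine Finset.sum_congr rfl fun m hm => ?_
    have hmu : m < p - (u : ℕ) := Finset.mem_range.mp hm
    rw [TT, dlem (u : ℕ) ((u : ℕ) + q + 1 + m) hu (by omega) (by omega) G H a]
    have e2 : (u : ℕ) + q + 1 + m - q = (u : ℕ) + 1 + m := by omega
    rw [e2]
    congr 2
    ring
  rw [hA, Finset.sum_congr rfl fun j _ => hsplit j, Finset.sum_add_distrib,
    Finset.sum_add_distrib, hlow, hmid.symm, hhigh]
  abel


lemma aux1 (s s' P1 P2 X Y : A) (hs : s * s' = 1) :
    (P1 + s * X + Y) - P1 = s * ((P2 + s' * Y + X) - P2) := by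
  have h4 : P1 + s * X + Y - P1 = s * X + Y := by abel
  have h5 : P2 + s' * Y + X - P2 = s' * Y + X := by abel
  rw [h4, h5, mul_add, ← mul_assoc, hs, one_mul]
  abel

lemma gsymm {p q r : ℕ} (F : MultilinearMap R (fun _ : Fin (p + 1) => A) A)
    (G : (Fin (q + 1) → A) → A) (H : (Fin (r + 1) → A) → A)
    (a : Fin (p + q + r + 1) → A) :
    gprod (gprod ⇑F G) H a
      - gprod ⇑F (gprod G H) (fun i : Fin (p + (q + r) + 1) => a (Fin.cast (by simp only [Nat.add_assoc]) i))
    = (-1 : A) ^ (q * r) *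
        (gprod (gprod ⇑F H) G (fun i : Fin (p + r + q + 1) => a (Fin.cast (by omega) i))
          - gprod ⇑F (gprod H G)
              (fun i : Fin (p + (r + q) + 1) => a (Fin.cast (by omega) i))) := by
  have h1 := expand F G H a
  have h2 := expand (p := p) (q := r) (r := q) F H G
    (fun i : Fin (p + r + q + 1) => a (Fin.cast (by omega) i))
  have e1 : (fun i : Fin (p + (r + q) + 1) =>
      (fun i : Fin (p + r + q + 1) => a (Fin.cast (by omega) i)) (Fin.cast (by omega) i))
      = (fun i : Fin (p + (r + q) + 1) => a (Fin.cast (by omega) i)) := rfl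
  have e2 : (fun i : Fin (p + q + r + 1) =>
      (fun i : Fin (p + r + q + 1) => a (Fin.cast (by omega) i)) (Fin.cast (by omega) i))
      = a := rfl
  rw [e1, e2] at h2
  rw [h1, h2]
  exact aux1 _ _ _ _ _ _ (by rw [← pow_add]; exact Even.neg_one_pow ⟨q * r, by ring⟩)


lemma gprod_right_cast {p m n : ℕ} (h : n = m) (F : (Fin (p + 1) → A) → A)
    (K : (Fin (m + 1) → A) → A) (a : Fin (p + n + 1) → A) :
    gprod F (fun c : Fin (n + 1) → A => K (fun i : Fin (m + 1) => c (Fin.cast (by omega) i))) a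
      = gprod F K (fun i : Fin (p + m + 1) => a (Fin.cast (by omega) i)) := by
  subst h
  rfl

lemma gprod_left_cast {p m n : ℕ} (h : n = m) (K : (Fin (m + 1) → A) → A)
    (F : (Fin (p + 1) → A) → A) (a : Fin (n + p + 1) → A) :
    gprod (fun c : Fin (n + 1) → A => K (fun i : Fin (m + 1) => c (Fin.cast (by omega) i))) F a
      = gprod K F (fun i : Fin (m + p + 1) => a (Fin.cast (by omega) i)) := by
  subst h
  rfl

lemma gprod_left_sub_smul {n p : ℕ} (X Y : (Fin (n + 1) → A) → A)
    (F : (Fin (p + 1) → A) → A) (e : ℕ) (a : Fin (n + p + 1) → A) :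
    gprod (fun c => X c - (-1 : A) ^ e * Y c) F a
      = gprod X F a - (-1 : A) ^ e * gprod Y F a := by
  rw [gprod_eq, gprod_eq, gprod_eq, Finset.mul_sum, ← Finset.sum_sub_distrib]
  refine Finset.sum_congr rfl fun j _ => ?_
  rw [mul_sub, ← mul_assoc, ← mul_assoc, pow_mul_comm]

lemma gprod_right_sub_smul {p n : ℕ} (F : MultilinearMap R (fun _ : Fin (p + 1) => A) A)
    (X Y : (Fin (n + 1) → A) → A) (e : ℕ) (a : Fin (p + n + 1) → A) :
    gprod ⇑F (fun c => X c - (-1 : A) ^ e * Y c) a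
      = gprod ⇑F X a - (-1 : A) ^ e * gprod ⇑F Y a := by
  rw [gprod_eq, gprod_eq, gprod_eq, Finset.mul_sum, ← Finset.sum_sub_distrib]
  refine Finset.sum_congr rfl fun j _ => ?_
  rw [map_insV_sub F (j : ℕ) j.is_le, map_insV_sign F (j : ℕ) j.is_le, mul_sub,
    ← mul_assoc, ← mul_assoc, pow_mul_comm]

lemma jacobi_alg (e1 e2 e3 u1 u2 u3 u4 u5 u6 v1 v2 v3 v4 v5 v6 : A)
    (he1 : e1 = 1 ∨ e1 = -1) (he2 : e2 = 1 ∨ e2 = -1) (he3 : e3 = 1 ∨ e3 = -1)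
    (S1 : v1 - u1 = e3 * (v2 - u2))
    (S2 : v3 - u3 = e2 * (v4 - u4))
    (S3 : v5 - u5 = e1 * (v6 - u6)) :
    (u1 - e3 * u2) - (e1 * e2) * (v4 - e3 * v6)
      = ((v1 - e1 * v3) - (e2 * e3) * (u5 - e1 * u6))
        + e1 * ((u3 - e2 * u4) - (e1 * e3) * (v2 - e2 * v5)) := by
  have hu1 : u1 = v1 - e3 * (v2 - u2) := by rw [← S1]; abel
  have hu3 : u3 = v3 - e2 * (v4 - u4) := by rw [← S2]; abel
  have hu5 : u5 = v5 - e1 * (v6 - u6) := by rw [← S3]; abel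
  subst hu1 hu3 hu5
  rcases he1 with h1 | h1 <;> rcases he2 with h2 | h2 <;> rcases he3 with h3 | h3 <;>
    subst h1 h2 h3 <;> noncomm_ring

lemma neg_one_pow_cases (n : ℕ) : (-1 : A) ^ n = 1 ∨ (-1 : A) ^ n = -1 :=
  (Nat.even_or_odd n).imp (fun h => h.neg_one_pow) (fun h => h.neg_one_pow)

end Gerst

open Gerst in
set_option maxHeartbeats 1000000 in
/-- For cochains `F, G, H` of arities `p+1, q+1, r+1` on an associative
`R`-algebra, the Gerstenhaber bracket satisfies graded antisymmetry
`[F,G] = −(−1)^{pq} [G,F]` and the graded Jacobi identity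
`[F,[G,H]] = [[F,G],H] + (−1)^{pq} [G,[F,H]]`. -/
theorem stmt11 {R A : Type*} [CommRing R] [Ring A] [Algebra R A] {p q r : ℕ}
    (F : MultilinearMap R (fun _ : Fin (p + 1) => A) A)
    (G : MultilinearMap R (fun _ : Fin (q + 1) => A) A)
    (H : MultilinearMap R (fun _ : Fin (r + 1) => A) A) :
    (∀ a : Fin (p + q + 1) → A,
      gbrak ⇑F ⇑G a =
        -((-1 : A) ^ (p * q) * gbrak ⇑G ⇑F (fun i => a (Fin.cast (by omega) i)))) ∧
    (∀ a : Fin (p + q + r + 1) → A,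
      gbrak ⇑F (gbrak ⇑G ⇑H) (fun i => a (Fin.cast (by omega) i)) =
        gbrak (gbrak ⇑F ⇑G) ⇑H (fun i => a (Fin.cast (by omega) i)) +
          (-1 : A) ^ (p * q) *
            gbrak ⇑G (gbrak ⇑F ⇑H) (fun i => a (Fin.cast (by omega) i))) := by
  constructor
  · intro a
    have h : gbrak ⇑F ⇑G a = gprod ⇑F ⇑G a
        - (-1 : A) ^ (p * q) * gprod ⇑G ⇑F (fun i : Fin (q + p + 1) => a (Fin.cast (by omega) i)) := rfl
    have h2 : gbrak ⇑G ⇑F (fun i : Fin (q + p + 1) => a (Fin.cast (by omega) i))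
        = gprod ⇑G ⇑F (fun i : Fin (q + p + 1) => a (Fin.cast (by omega) i))
          - (-1 : A) ^ (q * p) * gprod ⇑F ⇑G a := rfl
    rw [h, h2, show q * p = p * q from Nat.mul_comm q p]
    rcases neg_one_pow_cases (A := A) (p * q) with hh | hh <;> rw [hh] <;> noncomm_ring
  · intro a
    have S1 := gsymm (R := R) F ⇑G ⇑H a
    have S2 := gsymm (R := R) (p := q) (q := p) (r := r) G ⇑F ⇑H
      (fun i : Fin (q + p + r + 1) => a (Fin.cast (by omega) i))
    have S3 := gsymm (R := R) (p := r) (q := p) (r := q) H ⇑F ⇑G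
      (fun i : Fin (r + p + q + 1) => a (Fin.cast (by omega) i))
    have L1 : gbrak ⇑F (gbrak ⇑G ⇑H) (fun i : Fin (p + (q + r) + 1) => a (Fin.cast (by omega) i))
        = (gprod ⇑F (gprod ⇑G ⇑H) (fun i : Fin (p + (q + r) + 1) => a (Fin.cast (by omega) i))
            - (-1 : A) ^ (q * r) *
              gprod ⇑F (gprod ⇑H ⇑G) (fun i : Fin (p + (r + q) + 1) => a (Fin.cast (by omega) i)))
          - ((-1 : A) ^ (p * q) * (-1 : A) ^ (p * r)) *
            (gprod (gprod ⇑G ⇑H) ⇑F (fun i : Fin (q + r + p + 1) => a (Fin.cast (by omega) i))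
              - (-1 : A) ^ (q * r) *
                gprod (gprod ⇑H ⇑G) ⇑F (fun i : Fin (r + q + p + 1) => a (Fin.cast (by omega) i))) := by
      have h0 : gbrak ⇑F (gbrak ⇑G ⇑H) (fun i : Fin (p + (q + r) + 1) => a (Fin.cast (by omega) i))
          = gprod ⇑F (gbrak ⇑G ⇑H) (fun i : Fin (p + (q + r) + 1) => a (Fin.cast (by omega) i))
            - (-1 : A) ^ (p * (q + r)) *
              gprod (gbrak ⇑G ⇑H) ⇑F (fun i : Fin (q + r + p + 1) => a (Fin.cast (by omega) i)) := rfl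
      rw [h0]
      rw [show gbrak ⇑G ⇑H = (fun c : Fin (q + r + 1) → A => gprod ⇑G ⇑H c
        - (-1 : A) ^ (q * r) * gprod ⇑H ⇑G (fun i : Fin (r + q + 1) => c (Fin.cast (by omega) i)))
        from rfl]
      rw [gprod_right_sub_smul F (gprod ⇑G ⇑H)
        (fun c : Fin (q + r + 1) → A => gprod ⇑H ⇑G (fun i : Fin (r + q + 1) => c (Fin.cast (by omega) i))) (q * r)]
      rw [gprod_right_cast (show q + r = r + q from Nat.add_comm q r) ⇑F (gprod ⇑H ⇑G)]
      rw [gprod_left_sub_smul (gprod ⇑G ⇑H)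
        (fun c : Fin (q + r + 1) → A => gprod ⇑H ⇑G (fun i : Fin (r + q + 1) => c (Fin.cast (by omega) i))) ⇑F (q * r)]
      rw [gprod_left_cast (show q + r = r + q from Nat.add_comm q r) (gprod ⇑H ⇑G) ⇑F]
      rw [show p * (q + r) = p * q + p * r by ring, pow_add]
      rfl
    have L2 : gbrak (gbrak ⇑F ⇑G) ⇑H (fun i : Fin (p + q + r + 1) => a (Fin.cast (by omega) i))
        = (gprod (gprod ⇑F ⇑G) ⇑H a
            - (-1 : A) ^ (p * q) *
              gprod (gprod ⇑G ⇑F) ⇑H (fun i : Fin (q + p + r + 1) => a (Fin.cast (by omega) i)))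
          - ((-1 : A) ^ (p * r) * (-1 : A) ^ (q * r)) *
            (gprod ⇑H (gprod ⇑F ⇑G) (fun i : Fin (r + (p + q) + 1) => a (Fin.cast (by omega) i))
              - (-1 : A) ^ (p * q) *
                gprod ⇑H (gprod ⇑G ⇑F) (fun i : Fin (r + (q + p) + 1) => a (Fin.cast (by omega) i))) := by
      have h0 : gbrak (gbrak ⇑F ⇑G) ⇑H (fun i : Fin (p + q + r + 1) => a (Fin.cast (by omega) i))
          = gprod (gbrak ⇑F ⇑G) ⇑H a
            - (-1 : A) ^ ((p + q) * r) *
              gprod ⇑H (gbrak ⇑F ⇑G) (fun i : Fin (r + (p + q) + 1) => a (Fin.cast (by omega) i)) := rfl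
      rw [h0]
      rw [show gbrak ⇑F ⇑G = (fun c : Fin (p + q + 1) → A => gprod ⇑F ⇑G c
        - (-1 : A) ^ (p * q) * gprod ⇑G ⇑F (fun i : Fin (q + p + 1) => c (Fin.cast (by omega) i)))
        from rfl]
      rw [gprod_left_sub_smul (gprod ⇑F ⇑G)
        (fun c : Fin (p + q + 1) → A => gprod ⇑G ⇑F (fun i : Fin (q + p + 1) => c (Fin.cast (by omega) i))) ⇑H (p * q)]
      rw [gprod_left_cast (show p + q = q + p from Nat.add_comm p q) (gprod ⇑G ⇑F) ⇑H]
      rw [gprod_right_sub_smul H (gprod ⇑F ⇑G)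
        (fun c : Fin (p + q + 1) → A => gprod ⇑G ⇑F (fun i : Fin (q + p + 1) => c (Fin.cast (by omega) i))) (p * q)]
      rw [gprod_right_cast (show p + q = q + p from Nat.add_comm p q) ⇑H (gprod ⇑G ⇑F)]
      rw [show (p + q) * r = p * r + q * r by ring, pow_add]
      rfl
    have L3 : gbrak ⇑G (gbrak ⇑F ⇑H) (fun i : Fin (q + (p + r) + 1) => a (Fin.cast (by omega) i))
        = (gprod ⇑G (gprod ⇑F ⇑H) (fun i : Fin (q + (p + r) + 1) => a (Fin.cast (by omega) i))
            - (-1 : A) ^ (p * r) *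
              gprod ⇑G (gprod ⇑H ⇑F) (fun i : Fin (q + (r + p) + 1) => a (Fin.cast (by omega) i)))
          - ((-1 : A) ^ (p * q) * (-1 : A) ^ (q * r)) *
            (gprod (gprod ⇑F ⇑H) ⇑G (fun i : Fin (p + r + q + 1) => a (Fin.cast (by omega) i))
              - (-1 : A) ^ (p * r) *
                gprod (gprod ⇑H ⇑F) ⇑G (fun i : Fin (r + p + q + 1) => a (Fin.cast (by omega) i))) := by
      have h0 : gbrak ⇑G (gbrak ⇑F ⇑H) (fun i : Fin (q + (p + r) + 1) => a (Fin.cast (by omega) i))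
          = gprod ⇑G (gbrak ⇑F ⇑H) (fun i : Fin (q + (p + r) + 1) => a (Fin.cast (by omega) i))
            - (-1 : A) ^ (q * (p + r)) *
              gprod (gbrak ⇑F ⇑H) ⇑G (fun i : Fin (p + r + q + 1) => a (Fin.cast (by omega) i)) := rfl
      rw [h0]
      rw [show gbrak ⇑F ⇑H = (fun c : Fin (p + r + 1) → A => gprod ⇑F ⇑H c
        - (-1 : A) ^ (p * r) * gprod ⇑H ⇑F (fun i : Fin (r + p + 1) => c (Fin.cast (by omega) i)))
        from rfl]
      rw [gprod_right_sub_smul G (gprod ⇑F ⇑H)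
        (fun c : Fin (p + r + 1) → A => gprod ⇑H ⇑F (fun i : Fin (r + p + 1) => c (Fin.cast (by omega) i))) (p * r)]
      rw [gprod_right_cast (show p + r = r + p from Nat.add_comm p r) ⇑G (gprod ⇑H ⇑F)]
      rw [gprod_left_sub_smul (gprod ⇑F ⇑H)
        (fun c : Fin (p + r + 1) → A => gprod ⇑H ⇑F (fun i : Fin (r + p + 1) => c (Fin.cast (by omega) i))) ⇑G (p * r)]
      rw [gprod_left_cast (show p + r = r + p from Nat.add_comm p r) (gprod ⇑H ⇑F) ⇑G]
      rw [show q * (p + r) = p * q + q * r by ring, pow_add]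
      rfl
    rw [L1, L2, L3]
    exact jacobi_alg _ _ _ _ _ _ _ _ _ _ _ _ _ _ _
      (neg_one_pow_cases _) (neg_one_pow_cases _) (neg_one_pow_cases _) S1 S2 S3
end

section
/- Let A be a commutative R-algebra, X an R-linear derivation of A, F a p-cochain and G a q-cochain on A. Define the tensor-commutator ⟦F,G⟧ := F ∪ G − (−1)^{pq} G ∪ F. Then X ∘ ⟦F,G⟧ = ⟦X ∘ F, G⟧ − (−1)^{pq} ⟦X ∘ G, F⟧, where X ∘ H denotes the composition of the linear map X after the multilinear map H. (Ungraded form of the identity X ∘ ⟦D,E⟧ = ⟦X∘D, E⟧ + (−1)^{|D||E|+1} ⟦X∘E, D⟧ in the paper's appendix Lemma.) -/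
/-- The cup product of a `p`-cochain and a `q`-cochain:
`(F ∪ G)(a_1,…,a_{p+q}) = F(a_1,…,a_p) * G(a_{p+1},…,a_{p+q})`. -/
def cup {A : Type*} [Ring A] {p q : ℕ} (F : (Fin p → A) → A) (G : (Fin q → A) → A) :
    (Fin (p + q) → A) → A := fun a =>
  F (fun i => a (Fin.castAdd q i)) * G (fun j => a (Fin.natAdd p j))

/-- The tensor-commutator of a `p`-cochain and a `q`-cochain:
`⟦F,G⟧ = F ∪ G − (−1)^{pq} G ∪ F`. -/
def tcomm {A : Type*} [Ring A] {p q : ℕ} (F : (Fin p → A) → A) (G : (Fin q → A) → A) :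
    (Fin (p + q) → A) → A := fun a =>
  cup F G a - (-1 : A) ^ (p * q) * cup G F (fun i => a (Fin.cast (by omega) i))

/-- Let `A` be a commutative `R`-algebra, `X` an `R`-linear derivation of
`A`, `F` a `p`-cochain and `G` a `q`-cochain on `A`.  Then
`X ∘ ⟦F,G⟧ = ⟦X ∘ F, G⟧ − (−1)^{pq} ⟦X ∘ G, F⟧`. -/
theorem stmt13 {R A : Type*} [CommRing R] [CommRing A] [Algebra R A] {p q : ℕ}
    (X : A →ₗ[R] A) (hX : ∀ a b : A, X (a * b) = X a * b + a * X b)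
    (F : MultilinearMap R (fun _ : Fin p => A) A)
    (G : MultilinearMap R (fun _ : Fin q => A) A) :
    ∀ a : Fin (p + q) → A,
      X (tcomm ⇑F ⇑G a) =
        tcomm (fun v => X (F v)) ⇑G a -
          (-1 : A) ^ (p * q) *
            tcomm (fun v => X (G v)) ⇑F (fun i => a (Fin.cast (by omega) i)) := by
  intro a
  have h1 : X 1 = 0 := by have := hX 1 1; simpa using this
  have hc : X ((-1 : A) ^ (p * q)) = 0 := by
    rcases Nat.even_or_odd (p * q) with h | h
    · simp [h.neg_one_pow, h1]
    · simp [h.neg_one_pow, h1]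
  have hs : ((-1 : A) ^ (p * q)) * ((-1 : A) ^ (p * q)) = 1 := by
    rcases Nat.even_or_odd (p * q) with h | h <;> simp [h.neg_one_pow]
  simp only [tcomm, cup, map_sub, hX, hc, zero_mul, zero_add, Fin.cast_cast,
    Fin.cast_eq_self]
  rcases Nat.even_or_odd (p * q) with h | h <;> rw [mul_comm q p, show ((-1:A))^(p*q) = _ from h.neg_one_pow] <;> ring
end
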